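/- For every integer n ≥ 2, Σ_{i=2}^{n} L_{2i−2} L_{2i−1} = n − 3 + F_{4n−1}. -/
import Mathlib


/-- The Lucas numbers: L₀ = 2, L₁ = 1, Lₖ = Lₖ₋₁ + Lₖ₋₂. -/
def lucas : ℕ → ℕ
  | 0 => 2
  | 1 => 1
  | n + 2 => lucas (n + 1) + lucas n

lemma lucas_eq (k : ℕ) : lucas (k + 1) = Nat.fib k + Nat.fib (k + 2) := by
  induction k using Nat.strong_induction_on with
  | _ k ih =>
    match k with
    | 0 => rfl
    | 1 => rfl
    | (m + 2) =>
      have h1 := ih (m + 1) (by omega)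
      have h2 := ih m (by omega)
      show lucas (m + 2) + lucas (m + 1) = _
      rw [h1, h2, Nat.fib_add_two (n := m + 2), Nat.fib_add_two (n := m)]
      ring

lemma fib_step (k : ℕ) : Nat.fib (k + 2) = Nat.fib k + Nat.fib (k + 1) :=
  Nat.fib_add_two

lemma cassini (m : ℕ) :
    (Nat.fib (2 * m + 3) : ℤ) * Nat.fib (2 * m + 1) - (Nat.fib (2 * m + 2) : ℤ) ^ 2 = 1 := by
  induction m with
  | zero => simp [Nat.fib]
  | succ m ih =>
    have g3 : Nat.fib (2 * m + 3) = Nat.fib (2 * m + 1) + Nat.fib (2 * m + 2) := by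
      rw [show 2 * m + 3 = (2 * m + 1) + 2 by ring]; exact fib_step _
    have g4 : Nat.fib (2 * m + 4) = Nat.fib (2 * m + 2) + Nat.fib (2 * m + 3) := by
      rw [show 2 * m + 4 = (2 * m + 2) + 2 by ring]; exact fib_step _
    have g5 : Nat.fib (2 * m + 5) = Nat.fib (2 * m + 3) + Nat.fib (2 * m + 4) := by
      rw [show 2 * m + 5 = (2 * m + 3) + 2 by ring]; exact fib_step _
    rw [show 2 * (m + 1) + 3 = 2 * m + 5 by ring, show 2 * (m + 1) + 2 = 2 * m + 4 by ring,
      show 2 * (m + 1) + 1 = 2 * m + 3 by ring]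
    push_cast [g5, g4, g3]
    nlinarith [ih]

lemma key (m : ℕ) :
    (lucas (2 * (m + 2) - 2) : ℤ) * lucas (2 * (m + 2) - 1)
      = (Nat.fib (4 * (m + 2) - 1) : ℤ) - Nat.fib (4 * (m + 1) - 1) + 1 := by
  have h1 : 2 * (m + 2) - 2 = (2 * m + 1) + 1 := by omega
  have h2 : 2 * (m + 2) - 1 = (2 * m + 2) + 1 := by omega
  have h3 : 4 * (m + 2) - 1 = (2 * m + 3) + (2 * m + 3) + 1 := by omega
  have h4 : 4 * (m + 1) - 1 = (2 * m + 1) + (2 * m + 1) + 1 := by omega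
  have g3 : Nat.fib (2 * m + 3) = Nat.fib (2 * m + 1) + Nat.fib (2 * m + 2) := by
    rw [show 2 * m + 3 = (2 * m + 1) + 2 by ring]; exact fib_step _
  have g4 : Nat.fib (2 * m + 4) = Nat.fib (2 * m + 2) + Nat.fib (2 * m + 3) := by
    rw [show 2 * m + 4 = (2 * m + 2) + 2 by ring]; exact fib_step _
  have d1 : Nat.fib ((2 * m + 3) + (2 * m + 3) + 1)
      = Nat.fib (2 * m + 3) * Nat.fib (2 * m + 3) + Nat.fib (2 * m + 4) * Nat.fib (2 * m + 4) := by
    have := Nat.fib_add (2 * m + 3) (2 * m + 3)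
    rwa [show (2 * m + 3) + 1 = 2 * m + 4 by ring] at this
  have d2 : Nat.fib ((2 * m + 1) + (2 * m + 1) + 1)
      = Nat.fib (2 * m + 1) * Nat.fib (2 * m + 1) + Nat.fib (2 * m + 2) * Nat.fib (2 * m + 2) := by
    have := Nat.fib_add (2 * m + 1) (2 * m + 1)
    rwa [show (2 * m + 1) + 1 = 2 * m + 2 by ring] at this
  have hc := cassini m
  rw [h1, h2, h3, h4, lucas_eq, lucas_eq,
    show (2 * m + 1) + 2 = 2 * m + 3 by ring, show (2 * m + 2) + 2 = 2 * m + 4 by ring,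
    d1, d2]
  push_cast [g4, g3]
  nlinarith [hc]

theorem sum_lucas_prod (n : ℕ) (hn : 2 ≤ n) :
    ∑ i ∈ Finset.Icc 2 n, (lucas (2 * i - 2) : ℤ) * lucas (2 * i - 1)
      = (n : ℤ) - 3 + Nat.fib (4 * n - 1) := by
  induction n with
  | zero => omega
  | succ n ih =>
    rcases Nat.lt_or_ge n 2 with h | h
    · interval_cases n
      · omega
      · decide
    · rw [Finset.sum_Icc_succ_top (by omega), ih h]
      obtain ⟨m, rfl⟩ : ∃ m, n = m + 2 := ⟨n - 2, by omega⟩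
      have := key (m + 1)
      push_cast at this ⊢
      have e : m + 1 + 2 = m + 2 + 1 := by ring
      rw [e] at this
      linarith [this]
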